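/- arXiv:2506.07689 — 4 statements merged into one kernel-verified Lean document; each statement's English description precedes it below -/
import Mathlib

section
/- For any monic real polynomial f of degree n ≥ 1, the solution set S = {X ∈ M₂(ℝ) : f evaluated at X equals 0} has empty interior in M₂(ℝ). (Hence S ≠ M₂(ℝ) and S cannot contain an open ball.) -/
open Polynomial Matrix Finset

theorem stmt_9 (f : Polynomial ℝ) (hf : f.Monic) (hn : 1 ≤ f.natDegree) :
    interior {X : Matrix (Fin 2) (Fin 2) ℝ | Polynomial.aeval X f = 0} = ∅ := by
  rw [Set.eq_empty_iff_forall_notMem]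
  intro M hM
  set n := f.natDegree with hndef
  -- The matrix with a polynomial perturbation in the (0,0) entry
  set A : Matrix (Fin 2) (Fin 2) ℝ[X] :=
    Matrix.of fun i j => C (M i j) + if i = 0 ∧ j = 0 then Polynomial.X else 0 with hA
  have hA1 : ∀ i j : Fin 2, (A i j).natDegree ≤ 1 := by
    intro i j
    simp only [hA, Matrix.of_apply]
    split_ifs
    · exact (natDegree_add_le _ _).trans (by simp)
    · simp
  have hdeg : ∀ k, ∀ i j : Fin 2, ((A ^ k) i j).natDegree ≤ k := by
    intro k
    induction k with
    | zero =>
      intro i j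
      simp only [pow_zero, Matrix.one_apply]
      split_ifs <;> simp
    | succ k ih =>
      intro i j
      rw [pow_succ, Matrix.mul_apply]
      refine natDegree_sum_le_of_forall_le _ _ fun l _ => ?_
      exact (natDegree_mul_le).trans (add_le_add (ih i l) (hA1 l j))
  have hcoeff : ∀ k, 1 ≤ k → ∀ i j : Fin 2,
      ((A ^ k) i j).coeff k = if i = 0 ∧ j = 0 then 1 else 0 := by
    intro k hk
    induction k, hk using Nat.le_induction with
    | base =>
      intro i j
      simp only [pow_one, hA, Matrix.of_apply]
      split_ifs <;> simp
    | succ k hk ih =>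
      intro i j
      rw [pow_succ, Matrix.mul_apply, Polynomial.finset_sum_coeff]
      have hterm : ∀ l : Fin 2, ((A ^ k) i l * A l j).coeff (k + 1) =
          if l = 0 ∧ j = 0 then ((A ^ k) i l).coeff k else 0 := by
        intro l
        have hz : ((A ^ k) i l).coeff (k + 1) = 0 :=
          coeff_eq_zero_of_natDegree_lt (lt_of_le_of_lt (hdeg k i l) (Nat.lt_succ_self k))
        show ((A ^ k) i l * (C (M l j) + if l = 0 ∧ j = 0 then Polynomial.X else 0)).coeff (k + 1) = _
        split_ifs with h
        · rw [mul_add, coeff_add, coeff_mul_C, coeff_mul_X, hz, zero_mul, zero_add]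
        · rw [add_zero, coeff_mul_C, hz, zero_mul]
      rw [Fin.sum_univ_two, hterm 0, hterm 1]
      by_cases hj : j = 0
      · simp only [hj, and_true]
        rw [ih i 0]
        simp
      · simp [hj]
  set p : ℝ[X] := (Polynomial.aeval A f) 0 0 with hp
  have hpc : p.coeff n = 1 := by
    rw [hp, Polynomial.aeval_eq_sum_range, Matrix.sum_apply, Polynomial.finset_sum_coeff]
    rw [Finset.sum_eq_single_of_mem n (Finset.self_mem_range_succ n)]
    · rw [Matrix.smul_apply, Polynomial.coeff_smul, hcoeff n hn 0 0]
      simp [hndef, hf.coeff_natDegree]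
    · intro i hi hine
      have hilt : i < n := lt_of_le_of_ne (Nat.lt_succ_iff.mp (Finset.mem_range.mp hi)) hine
      rw [Matrix.smul_apply, Polynomial.coeff_smul,
        coeff_eq_zero_of_natDegree_lt (lt_of_le_of_lt (hdeg i 0 0) hilt), smul_zero]
  have hpne : p ≠ 0 := by
    intro h
    rw [h, Polynomial.coeff_zero] at hpc
    exact one_ne_zero hpc.symm
  -- topology
  set c : ℝ → Matrix (Fin 2) (Fin 2) ℝ :=
    fun t => Matrix.of fun i j => M i j + if i = 0 ∧ j = 0 then t else 0 with hc
  have hcont : Continuous c := by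
    apply continuous_matrix
    intro i j
    simp only [hc, Matrix.of_apply]
    by_cases h : i = 0 ∧ j = 0
    · simp only [if_pos h]; exact continuous_const.add continuous_id
    · simp only [if_neg h]; exact continuous_const
  have hc0 : c 0 = M := by
    ext i j
    simp [hc]
  have hmem : {X : Matrix (Fin 2) (Fin 2) ℝ | Polynomial.aeval X f = 0} ∈ nhds M :=
    mem_interior_iff_mem_nhds.mp hM
  have h0 : {t : ℝ | Polynomial.aeval (c t) f = 0} ∈ nhds (0 : ℝ) := by
    have := hcont.continuousAt (x := (0 : ℝ))
    exact this.preimage_mem_nhds (by rwa [hc0])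
  have hinf : Set.Infinite {t : ℝ | Polynomial.aeval (c t) f = 0} :=
    infinite_of_mem_nhds (0 : ℝ) h0
  have hsub : {t : ℝ | Polynomial.aeval (c t) f = 0} ⊆ {x : ℝ | p.IsRoot x} := by
    intro t ht
    have key : Polynomial.aeval (c t) f =
        ((Polynomial.aeval t).mapMatrix : Matrix (Fin 2) (Fin 2) ℝ[X] →ₐ[ℝ] Matrix (Fin 2) (Fin 2) ℝ)
          (Polynomial.aeval A f) := by
      rw [← Polynomial.aeval_algHom_apply]
      have hAc : ((Polynomial.aeval t).mapMatrix : Matrix (Fin 2) (Fin 2) ℝ[X] →ₐ[ℝ] Matrix (Fin 2) (Fin 2) ℝ) A = c t := by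
        ext i j
        simp only [AlgHom.mapMatrix_apply, Matrix.map_apply, hA, Matrix.of_apply, hc]
        split_ifs <;> simp
      rw [hAc]
    have ht' : Polynomial.aeval (c t) f = 0 := ht
    rw [key] at ht'
    have h00 := congrFun (congrFun (congrArg (fun (N : Matrix (Fin 2) (Fin 2) ℝ) => (N : Fin 2 → Fin 2 → ℝ)) ht') 0) 0
    simp only [AlgHom.mapMatrix_apply, Matrix.map_apply, Matrix.zero_apply] at h00
    show p.IsRoot t
    rwa [Polynomial.IsRoot, ← Polynomial.coe_aeval_eq_eval]
  exact hpne (Polynomial.eq_zero_of_infinite_isRoot p (hinf.mono hsub))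
end

section
/- For any n ≥ 1, the solution set of (X² + I)ⁿ = 0 over M₂(ℝ) equals the solution set of X² + I = 0. -/
theorem stmt_14 (n : ℕ) (hn : 1 ≤ n) :
    {X : Matrix (Fin 2) (Fin 2) ℝ | (X ^ 2 + 1) ^ n = 0} =
    {X : Matrix (Fin 2) (Fin 2) ℝ | X ^ 2 + 1 = 0} := by
  ext X
  simp only [Set.mem_setOf_eq]
  constructor
  · intro h
    -- determinant of X^2 + 1 is zero
    have hdet : (X ^ 2 + 1).det = 0 := by
      have : (X ^ 2 + 1).det ^ n = 0 := by
        rw [← Matrix.det_pow, h, Matrix.det_zero]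
      exact pow_eq_zero_iff (by omega) |>.mp this
    set a := X 0 0 with ha
    set b := X 0 1 with hb
    set c := X 1 0 with hc
    set d := X 1 1 with hd
    have e00 : (HAdd.hAdd (X ^ 2) 1 : Matrix (Fin 2) (Fin 2) ℝ) 0 0 = a * a + b * c + 1 := by
      simp [pow_two, Matrix.add_apply, Matrix.mul_apply, Fin.sum_univ_two,
        Matrix.one_apply, ha, hb, hc, hd]
    have e01 : (HAdd.hAdd (X ^ 2) 1 : Matrix (Fin 2) (Fin 2) ℝ) 0 1 = a * b + b * d := by
      simp [pow_two, Matrix.add_apply, Matrix.mul_apply, Fin.sum_univ_two,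
        Matrix.one_apply, ha, hb, hc, hd]
    have e10 : (HAdd.hAdd (X ^ 2) 1 : Matrix (Fin 2) (Fin 2) ℝ) 1 0 = c * a + d * c := by
      simp [pow_two, Matrix.add_apply, Matrix.mul_apply, Fin.sum_univ_two,
        Matrix.one_apply, ha, hb, hc, hd]
    have e11 : (HAdd.hAdd (X ^ 2) 1 : Matrix (Fin 2) (Fin 2) ℝ) 1 1 = c * b + d * d + 1 := by
      simp [pow_two, Matrix.add_apply, Matrix.mul_apply, Fin.sum_univ_two,
        Matrix.one_apply, ha, hb, hc, hd]
    rw [Matrix.det_fin_two, e00, e01, e10, e11] at hdet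
    -- det = (a*d - b*c - 1)^2 + (a+d)^2
    have key : (a * d - b * c - 1) ^ 2 + (a + d) ^ 2 = 0 := by ring_nf; ring_nf at hdet; linarith
    have h1 : a + d = 0 := by nlinarith [sq_nonneg (a * d - b * c - 1), sq_nonneg (a + d)]
    have h2 : a * d - b * c = 1 := by nlinarith [sq_nonneg (a * d - b * c - 1), sq_nonneg (a + d)]
    have hN : X ^ 2 + 1 = !![a * a + b * c + 1, a * b + b * d;
        c * a + d * c, c * b + d * d + 1] := by
      rw [Matrix.eta_fin_two (X ^ 2 + 1), e00, e01, e10, e11]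
    rw [hN]
    have z00 : a * a + b * c + 1 = 0 := by linear_combination a * h1 - h2
    have z01 : a * b + b * d = 0 := by linear_combination b * h1
    have z10 : c * a + d * c = 0 := by linear_combination c * h1
    have z11 : c * b + d * d + 1 = 0 := by linear_combination d * h1 - h2
    rw [z00, z01, z10, z11]
    ext i j
    fin_cases i <;> fin_cases j <;> simp
  · intro h
    rw [h]
    exact zero_pow (by omega)
end

section
/- Let A ∈ M₂(ℝ) with A ≠ 0 and det A = 0, and let a₀ > 0. Then the equation X² + a₀I = A has no solution X ∈ M₂(ℝ). -/
/-!
By Cayley–Hamilton, `X² = (tr X) X - (det X) I`, so `X² + a I = (tr X) X + (a - det X) I`,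
and `det (X² + a I) = χ(i√a) χ(-i√a) = (det X - a)² + a (tr X)²` for the characteristic
polynomial `χ`.
For `a > 0` this vanishes only if `tr X = 0` and `det X = a`, and then `X² + a I = 0`.
-/

namespace Matrix

variable {R : Type*}

theorem sq_eq_trace_smul_sub_det_smul_fin_two [CommRing R] (X : Matrix (Fin 2) (Fin 2) R) :
    X ^ 2 = X.trace • X - X.det • (1 : Matrix (Fin 2) (Fin 2) R) := by
  ext i j
  fin_cases i <;> fin_cases j <;>
    simp only [Fin.zero_eta, Fin.mk_one, Fin.isValue, sq, mul_apply, Fin.sum_univ_two,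
      trace_fin_two, det_fin_two, sub_apply, smul_apply, smul_eq_mul, one_apply_eq,
      one_apply_ne zero_ne_one, one_apply_ne one_ne_zero, mul_one, mul_zero, sub_zero] <;> ring

theorem det_sq_add_smul_one_fin_two [CommRing R] (X : Matrix (Fin 2) (Fin 2) R) (a : R) :
    (X ^ 2 + a • (1 : Matrix (Fin 2) (Fin 2) R)).det = (X.det - a) ^ 2 + a * X.trace ^ 2 := by
  simp only [sq, det_fin_two, trace_fin_two, Fin.isValue, add_apply, mul_apply, Fin.sum_univ_two,
    smul_apply, smul_eq_mul, one_apply_eq, one_apply_ne zero_ne_one, one_apply_ne one_ne_zero,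
    mul_one, mul_zero, add_zero]
  ring

theorem sq_add_smul_one_eq_zero_of_det_eq_zero_fin_two
    [Field R] [LinearOrder R] [IsStrictOrderedRing R]
    {X : Matrix (Fin 2) (Fin 2) R} {a : R} (ha : 0 < a)
    (hdet : (X ^ 2 + a • (1 : Matrix (Fin 2) (Fin 2) R)).det = 0) :
    X ^ 2 + a • (1 : Matrix (Fin 2) (Fin 2) R) = 0 := by
  rw [det_sq_add_smul_one_fin_two] at hdet
  have htrace : X.trace = 0 := by
    have : X.trace ^ 2 ≤ 0 := by nlinarith [sq_nonneg (X.det - a)]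
    exact pow_eq_zero_iff two_ne_zero |>.mp (le_antisymm this (sq_nonneg _))
  have hdet_eq : X.det = a := by
    rw [htrace] at hdet
    exact sub_eq_zero.mp (pow_eq_zero_iff two_ne_zero |>.mp (by simpa using hdet))
  rw [sq_eq_trace_smul_sub_det_smul_fin_two, htrace, hdet_eq]
  simp

end Matrix

theorem stmt_16 (A : Matrix (Fin 2) (Fin 2) ℝ) (hA : A ≠ 0) (hdet : A.det = 0)
    (a₀ : ℝ) (h : 0 < a₀) :
    ¬ ∃ X : Matrix (Fin 2) (Fin 2) ℝ, X ^ 2 + a₀ • (1 : Matrix (Fin 2) (Fin 2) ℝ) = A := by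
  rintro ⟨X, rfl⟩
  exact hA (Matrix.sq_add_smul_one_eq_zero_of_det_eq_zero_fin_two h hdet)
end

section
/- The equation (X² − I)² = A, where A is the 2×2 matrix with rows (1,0) and (0,0), has exactly 6 solutions X in M₂(ℝ). -/
/-!
A solution `X` commutes with `(X² - 1)² = diag(1, 0)`, whose diagonal entries are distinct, so
`X = diag(a, d)` is diagonal. The equation then splits into `(a² - 1)² = 1` and `(d² - 1)² = 0`,
with solutions `a ∈ {0, ±√2}` and `d = ±1`, giving `3 · 2 = 6` matrices.
-/

open Matrix

theorem Matrix.apply_eq_zero_of_commute_diagonal {n R : Type*} [Fintype n] [DecidableEq n]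
    [CommRing R] [NoZeroDivisors R] {M : Matrix n n R} {d : n → R}
    (h : Commute M (diagonal d)) {i j : n} (hij : d i ≠ d j) : M i j = 0 := by
  have hij' := congrFun (congrFun h.eq i) j
  rw [mul_diagonal, diagonal_mul] at hij'
  have : M i j * (d j - d i) = 0 := by linear_combination hij'
  exact (mul_eq_zero.mp this).resolve_right (sub_ne_zero.mpr hij.symm)

theorem Matrix.eq_diagonal_of_commute_diagonal {n R : Type*} [Fintype n] [DecidableEq n]
    [CommRing R] [NoZeroDivisors R] {M : Matrix n n R} {d : n → R}
    (h : Commute M (diagonal d)) (hd : Function.Injective d) :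
    M = diagonal fun i => M i i := by
  ext i j
  by_cases hij : i = j
  · subst hij; simp
  · rw [diagonal_apply_ne _ hij]
    exact apply_eq_zero_of_commute_diagonal h (hd.ne hij)

theorem Matrix.diagonal_sq_sub_one_sq {n R : Type*} [Fintype n] [DecidableEq n] [Ring R]
    (v : n → R) : (diagonal v ^ 2 - 1) ^ 2 = diagonal fun i => (v i ^ 2 - 1) ^ 2 := by
  rw [diagonal_pow, ← diagonal_one, diagonal_sub, diagonal_pow]
  rfl

theorem setOf_sq_sub_one_sq_eq_one :
    {a : ℝ | (a ^ 2 - 1) ^ 2 = 1} = {0, √2, -√2} := by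
  ext a
  have h2 : (2 : ℝ) = √2 ^ 2 := (Real.sq_sqrt zero_le_two).symm
  have : (a ^ 2 - 1) ^ 2 = 1 ↔ a ^ 2 * (a ^ 2 - √2 ^ 2) = 0 := by
    rw [← h2]; constructor <;> intro h <;> linear_combination h
  simp only [Set.mem_ofPred_eq, Set.mem_insert_iff, Set.mem_singleton_iff, this, mul_eq_zero,
    pow_eq_zero_iff two_ne_zero, sub_eq_zero, sq_eq_sq_iff_eq_or_eq_neg]

theorem setOf_sq_sub_one_sq_eq_zero :
    {d : ℝ | (d ^ 2 - 1) ^ 2 = 0} = {1, -1} := by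
  ext d
  simp [sub_eq_zero]

theorem encard_zero_sqrt_two_neg_sqrt_two : ({0, √2, -√2} : Set ℝ).encard = 3 := by
  have hs : 0 < √2 := by positivity
  rw [Set.encard_eq_three]
  exact ⟨_, _, _, hs.ne, by linarith, by linarith, rfl⟩

theorem setOf_sq_sub_one_sq_eq_diagonal_one_zero :
    {X : Matrix (Fin 2) (Fin 2) ℝ | (X ^ 2 - 1) ^ 2 = !![1, 0; 0, 0]} =
      (fun p : ℝ × ℝ => diagonal ![p.1, p.2]) ''
        ({a | (a ^ 2 - 1) ^ 2 = 1} ×ˢ {d | (d ^ 2 - 1) ^ 2 = 0}) := by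
  have hA : !![(1 : ℝ), 0; 0, 0] = diagonal ![1, 0] := by
    ext i j; fin_cases i <;> fin_cases j <;> rfl
  ext X
  simp only [Set.mem_ofPred_eq, Set.mem_image, Set.mem_prod, Prod.exists, hA]
  constructor
  · intro hX
    have hcomm : Commute X (diagonal ![1, 0]) :=
      hX ▸ (((Commute.refl X).pow_right 2).sub_right (Commute.one_right X)).pow_right 2
    have hdiag : X = diagonal ![X 0 0, X 1 1] := by
      have hinj : Function.Injective ![(1 : ℝ), 0] := by
        intro i j; fin_cases i <;> fin_cases j <;> simp
      refine (eq_diagonal_of_commute_diagonal hcomm hinj).trans (congrArg diagonal ?_)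
      ext i; fin_cases i <;> rfl
    rw [hdiag, diagonal_sq_sub_one_sq] at hX
    have hentries := diagonal_injective hX
    exact ⟨X 0 0, X 1 1, ⟨congrFun hentries 0, congrFun hentries 1⟩, hdiag.symm⟩
  · rintro ⟨a, d, ⟨ha, hd⟩, rfl⟩
    rw [diagonal_sq_sub_one_sq]
    congr 1
    ext i; fin_cases i <;> simp [ha, hd]

theorem stmt_18 :
    {X : Matrix (Fin 2) (Fin 2) ℝ | (X ^ 2 - 1) ^ 2 = !![1, 0; 0, 0]}.encard = 6 := by
  have hinj : Function.Injective fun p : ℝ × ℝ => diagonal ![p.1, p.2] := by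
    intro p q h
    have h := diagonal_injective h
    exact Prod.ext (congrFun h 0) (congrFun h 1)
  rw [setOf_sq_sub_one_sq_eq_diagonal_one_zero, hinj.encard_image, Set.encard_prod,
    setOf_sq_sub_one_sq_eq_one, setOf_sq_sub_one_sq_eq_zero, encard_zero_sqrt_two_neg_sqrt_two,
    Set.encard_pair (by norm_num)]
  rfl
end
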